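/- For every ε ∈ (0,1) there exists a constant C > 0, depending only on ε, such that for all θ > 0, all λ ∈ ℂ and all φ ∈ (0,θ) satisfying 1 − (1−ε)π/θ ≤ Re λ ≤ (1−ε)π/θ − 1, |Im λ|·θ < 1/4, |λ−1| ≥ 1/4 and |λ+1| ≥ 1/4, one has |(λ+1)cos((λ+1)φ)/(4λ sin((λ+1)θ)) − (λ−1)cos((λ−1)φ)/(4λ sin((λ−1)θ))| ≤ C·θ. -/

import Mathlib

open Real

/-!
Put `u = zθ` and `s = φ/θ ∈ [0, 1]`. Then `z cos (zφ) / sin (zθ) = G (zθ) / θ` with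
`G u = cos (s u) / sinc u`, which is holomorphic and even on the rectangle
`|Re u| ≤ α = (1 - ε)π`, `|Im u| ≤ 1/4`, because `|sinc u| ≥ sin α / α` there. On this rectangle
`|G' u| ≤ K |u|` with `K` depending only on `α`, since `sinc' u = (u cos u - sin u) / u²` is `O(u)`.
For `w = λθ` the mean value theorem gives `|G (w + θ) - G (w - θ)| ≤ 4 K θ |w|`: along
`[w - θ, w + θ]` when `θ ≤ |w|`, and otherwise along `[0, w]` for the odd function
`u ↦ G (u + θ) - G (u - θ)`, which vanishes at `0`. Dividing by `|4λθ|` leaves `K θ`.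
-/

section SymmetricDifference

variable {𝕜 E : Type*} [RCLike 𝕜] [NormedAddCommGroup E] [NormedSpace 𝕜 E]
  {f : 𝕜 → E} {R : Set 𝕜} {K : ℝ} {w h : 𝕜}

theorem norm_image_add_sub_image_sub_le_of_norm_deriv_le (hR : Convex ℝ R)
    (hf : ∀ z ∈ R, DifferentiableAt 𝕜 f z) (hf' : ∀ z ∈ R, ‖deriv f z‖ ≤ K * ‖z‖) (hK : 0 ≤ K)
    (hp : w + h ∈ R) (hm : w - h ∈ R) :
    ‖f (w + h) - f (w - h)‖ ≤ 2 * K * (‖w‖ + ‖h‖) * ‖h‖ := by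
  set S := R ∩ Metric.closedBall 0 (‖w‖ + ‖h‖)
  have hS : Convex ℝ S := hR.inter (convex_closedBall 0 _)
  have hbound : ∀ z ∈ S, ‖deriv f z‖ ≤ K * (‖w‖ + ‖h‖) := fun z hz =>
    (hf' z hz.1).trans (mul_le_mul_of_nonneg_left (mem_closedBall_zero_iff.1 hz.2) hK)
  have hmem : ∀ z ∈ R, ‖z‖ ≤ ‖w‖ + ‖h‖ → z ∈ S := fun z hz hz' =>
    ⟨hz, mem_closedBall_zero_iff.2 hz'⟩
  have key := hS.norm_image_sub_le_of_norm_deriv_le (fun z hz => hf z hz.1) hbound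
    (hmem _ hm (norm_sub_le _ _)) (hmem _ hp (norm_add_le _ _))
  rw [show w + h - (w - h) = 2 * h by ring, norm_mul, RCLike.norm_two] at key
  linarith

theorem norm_image_add_sub_image_sub_le_of_norm_deriv_le_of_even (hR : Convex ℝ R)
    (hf : ∀ z ∈ R, DifferentiableAt 𝕜 f z) (hf' : ∀ z ∈ R, ‖deriv f z‖ ≤ K * ‖z‖) (hK : 0 ≤ K)
    (hfh : f (-h) = f h) (hp : w + h ∈ R) (hm : w - h ∈ R) (hh : h ∈ R) (hh' : -h ∈ R) :
    ‖f (w + h) - f (w - h)‖ ≤ 2 * K * (‖w‖ + ‖h‖) * ‖w‖ := by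
  set S := (fun u => u + h) ⁻¹' R ∩ (fun u => u - h) ⁻¹' R ∩ Metric.closedBall 0 ‖w‖
  have hS : Convex ℝ S := by
    refine ((hR.translate_preimage_left h).inter ?_).inter (convex_closedBall 0 _)
    simpa only [sub_eq_add_neg] using hR.translate_preimage_left (-h)
  have hderiv : ∀ u ∈ S, HasDerivWithinAt (fun u => f (u + h) - f (u - h))
      (deriv f (u + h) - deriv f (u - h)) S u := fun u hu =>
    (((hf _ hu.1.1).hasDerivAt.comp_add_const u h).sub
      ((hf _ hu.1.2).hasDerivAt.comp_sub_const u h)).hasDerivWithinAt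
  have hbound : ∀ u ∈ S, ‖deriv f (u + h) - deriv f (u - h)‖ ≤ 2 * K * (‖w‖ + ‖h‖) := by
    rintro u ⟨⟨hup, hum⟩, hu⟩
    rw [mem_closedBall_zero_iff] at hu
    have hup' : ‖u + h‖ ≤ ‖w‖ + ‖h‖ := (norm_add_le _ _).trans (by linarith)
    have hum' : ‖u - h‖ ≤ ‖w‖ + ‖h‖ := (norm_sub_le _ _).trans (by linarith)
    calc ‖deriv f (u + h) - deriv f (u - h)‖ ≤ K * ‖u + h‖ + K * ‖u - h‖ :=
          (norm_sub_le _ _).trans (add_le_add (hf' _ hup) (hf' _ hum))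
      _ ≤ K * (‖w‖ + ‖h‖) + K * (‖w‖ + ‖h‖) := by gcongr
      _ = 2 * K * (‖w‖ + ‖h‖) := by ring
  have h0 : (0 : 𝕜) ∈ S :=
    ⟨⟨by simpa using hh, by simpa using hh'⟩, Metric.mem_closedBall_self (norm_nonneg w)⟩
  have hw : w ∈ S := ⟨⟨hp, hm⟩, mem_closedBall_zero_iff.2 le_rfl⟩
  simpa [hfh] using hS.norm_image_sub_le_of_norm_hasDerivWithin_le hderiv hbound h0 hw

theorem norm_image_add_sub_image_sub_le (hR : Convex ℝ R)
    (hf : ∀ z ∈ R, DifferentiableAt 𝕜 f z) (hf' : ∀ z ∈ R, ‖deriv f z‖ ≤ K * ‖z‖) (hK : 0 ≤ K)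
    (hfh : f (-h) = f h) (hp : w + h ∈ R) (hm : w - h ∈ R) (hh : h ∈ R) (hh' : -h ∈ R) :
    ‖f (w + h) - f (w - h)‖ ≤ 4 * K * ‖h‖ * ‖w‖ := by
  rcases le_total ‖h‖ ‖w‖ with hle | hle
  · have := norm_image_add_sub_image_sub_le_of_norm_deriv_le hR hf hf' hK hp hm
    nlinarith [mul_nonneg hK (norm_nonneg h)]
  · have := norm_image_add_sub_image_sub_le_of_norm_deriv_le_of_even hR hf hf' hK hfh hp hm hh hh'
    nlinarith [mul_nonneg hK (norm_nonneg w)]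

end SymmetricDifference

theorem convex_abs_re_le (a : ℝ) : Convex ℝ {z : ℂ | |z.re| ≤ a} := by
  simpa [Set.preimage, abs_le] using (convex_Icc (-a) a).linear_preimage Complex.reLm

theorem convex_abs_im_le (b : ℝ) : Convex ℝ {z : ℂ | |z.im| ≤ b} := by
  simpa [Set.preimage, abs_le] using (convex_Icc (-b) b).linear_preimage Complex.imLm

theorem Real.sin_div_mul_abs_le_abs_sin {α x : ℝ} (hα0 : 0 < α) (hαπ : α ≤ π) (hx : |x| ≤ α) :
    Real.sin α / α * |x| ≤ |Real.sin x| := by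
  have h := strictConcaveOn_sin_Icc.concaveOn.2 ⟨le_rfl, pi_pos.le⟩ ⟨hα0.le, hαπ⟩
    (sub_nonneg.2 ((div_le_one hα0).2 hx)) (div_nonneg (abs_nonneg x) hα0.le) (by ring)
  simp only [smul_eq_mul, mul_zero, zero_add, Real.sin_zero, div_mul_cancel₀ _ hα0.ne'] at h
  rw [Real.abs_sin_eq_sin_abs_of_abs_le_pi (hx.trans hαπ)]
  linarith [show Real.sin α / α * |x| = |x| / α * Real.sin α by ring]

namespace Complex

theorem norm_sin_sq (z : ℂ) : ‖sin z‖ ^ 2 = Real.sin z.re ^ 2 + Real.sinh z.im ^ 2 := by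
  rw [Complex.sq_norm, normSq_apply, sin_eq, ← ofReal_sin, ← ofReal_cos, ← ofReal_sinh,
    ← ofReal_cosh]
  simp only [add_re, add_im, mul_re, mul_im, ofReal_re, ofReal_im, I_re, I_im]
  nlinarith [Real.sin_sq_add_cos_sq z.re, Real.cosh_sq z.im]

theorem norm_cos_le_cosh_im (z : ℂ) : ‖cos z‖ ≤ Real.cosh z.im := by
  rw [cos, Real.cosh_eq, norm_div, Complex.norm_two]
  gcongr
  refine (norm_add_le _ _).trans_eq ?_
  simp [norm_exp, add_comm]

theorem norm_cos_le_cosh {b : ℝ} {z : ℂ} (hz : |z.im| ≤ b) : ‖cos z‖ ≤ Real.cosh b :=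
  (norm_cos_le_cosh_im z).trans (Real.cosh_le_cosh.2 (hz.trans (le_abs_self b)))

theorem norm_sin_le_cosh_mul_norm {b : ℝ} {z : ℂ} (hz : |z.im| ≤ b) :
    ‖sin z‖ ≤ Real.cosh b * ‖z‖ := by
  have h0 : (0 : ℂ) ∈ {z : ℂ | |z.im| ≤ b} := by simpa using (abs_nonneg _).trans hz
  simpa using (convex_abs_im_le b).norm_image_sub_le_of_norm_deriv_le
    (fun z _ => differentiableAt_sin) (fun z hz => by simpa using norm_cos_le_cosh hz) h0 hz

theorem sin_div_mul_norm_le_norm_sin {α : ℝ} (hα0 : 0 < α) (hαπ : α ≤ π) {z : ℂ}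
    (hz : |z.re| ≤ α) : Real.sin α / α * ‖z‖ ≤ ‖sin z‖ := by
  set c := Real.sin α / α
  have hc0 : 0 ≤ c := div_nonneg (Real.sin_nonneg_of_nonneg_of_le_pi hα0.le hαπ) hα0.le
  have hc1 : c ≤ 1 := (div_le_one hα0).2 (Real.sin_le hα0.le)
  have hre : (c * |z.re|) ^ 2 ≤ |Real.sin z.re| ^ 2 :=
    pow_le_pow_left₀ (by positivity) (Real.sin_div_mul_abs_le_abs_sin hα0 hαπ hz) 2
  have him : |z.im| ^ 2 ≤ |Real.sinh z.im| ^ 2 := by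
    refine pow_le_pow_left₀ (abs_nonneg _) ?_ 2
    rw [Real.abs_sinh]
    exact Real.self_le_sinh_iff.2 (abs_nonneg _)
  simp only [mul_pow, sq_abs] at hre him
  rw [← sq_le_sq₀ (by positivity) (norm_nonneg _), norm_sin_sq, mul_pow, Complex.sq_norm,
    normSq_apply]
  nlinarith [mul_le_mul_of_nonneg_right (pow_le_one₀ hc0 hc1 (n := 2)) (sq_nonneg z.im)]

theorem norm_mul_cos_sub_sin_le {b : ℝ} {z : ℂ} (hz : |z.im| ≤ b) :
    ‖z * cos z - sin z‖ ≤ Real.cosh b * ‖z‖ ^ 3 := by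
  set S := {u : ℂ | |u.im| ≤ |z.im|} ∩ Metric.closedBall 0 ‖z‖
  have hS : Convex ℝ S := (convex_abs_im_le _).inter (convex_closedBall 0 _)
  have hderiv : ∀ u ∈ S, HasDerivWithinAt (fun u => u * cos u - sin u) (-(u * sin u)) S u := by
    intro u _
    have hd : HasDerivAt (fun u => u * cos u - sin u) (1 * cos u + u * -sin u - cos u) u :=
      ((hasDerivAt_id' u).mul (hasDerivAt_cos u)).sub (hasDerivAt_sin u)
    exact (hd.congr_deriv (by ring)).hasDerivWithinAt
  have hbound : ∀ u ∈ S, ‖-(u * sin u)‖ ≤ Real.cosh b * ‖z‖ ^ 2 := by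
    rintro u ⟨hu_im, hu_norm⟩
    rw [mem_closedBall_zero_iff] at hu_norm
    rw [norm_neg, norm_mul, sq, mul_left_comm]
    exact mul_le_mul hu_norm ((norm_sin_le_cosh_mul_norm (hu_im.trans hz)).trans (by gcongr))
      (norm_nonneg _) (norm_nonneg _)
  have h0 : (0 : ℂ) ∈ S := ⟨by simp, Metric.mem_closedBall_self (norm_nonneg z)⟩
  have hz' : z ∈ S := ⟨le_refl |z.im|, mem_closedBall_zero_iff.2 le_rfl⟩
  have key := hS.norm_image_sub_le_of_norm_hasDerivWithin_le hderiv hbound h0 hz'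
  simp only [zero_mul, sin_zero, sub_zero] at key
  linarith [show Real.cosh b * ‖z‖ ^ 2 * ‖z‖ = Real.cosh b * ‖z‖ ^ 3 by ring]

noncomputable def sinc : ℂ → ℂ := dslope sin 0

theorem sin_eq_mul_sinc (z : ℂ) : sin z = z * sinc z := by
  simpa [sinc] using (sub_smul_dslope sin 0 z).symm

theorem sinc_of_ne_zero {z : ℂ} (hz : z ≠ 0) : sinc z = sin z / z := by
  rw [sin_eq_mul_sinc, mul_div_cancel_left₀ _ hz]

theorem sinc_zero : sinc 0 = 1 := by
  simp [sinc, dslope_same]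

theorem sinc_neg (z : ℂ) : sinc (-z) = sinc z := by
  rcases eq_or_ne z 0 with rfl | hz
  · simp
  · rw [sinc_of_ne_zero hz, sinc_of_ne_zero (neg_ne_zero.2 hz), sin_neg, neg_div_neg_eq]

theorem differentiable_sinc : Differentiable ℂ sinc :=
  differentiableOn_univ.1 <| (differentiableOn_dslope Filter.univ_mem).2
    differentiable_sin.differentiableOn

theorem deriv_sinc_zero : deriv sinc 0 = 0 := by
  have h : deriv sinc 0 = -deriv sinc 0 := by
    simpa [sinc_neg] using deriv_comp_neg (f := sinc) (x := 0)
  linear_combination h / 2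

theorem deriv_sinc_of_ne_zero {z : ℂ} (hz : z ≠ 0) :
    deriv sinc z = (z * cos z - sin z) / z ^ 2 := by
  have hd := (hasDerivAt_sin z).div (hasDerivAt_id' z) hz
  have heq : sinc =ᶠ[nhds z] fun u => sin u / u := by
    filter_upwards [eventually_ne_nhds hz] with u hu using sinc_of_ne_zero hu
  rw [heq.deriv_eq]
  exact hd.deriv.trans (by ring)

theorem norm_deriv_sinc_le {b : ℝ} {z : ℂ} (hz : |z.im| ≤ b) :
    ‖deriv sinc z‖ ≤ Real.cosh b * ‖z‖ := by
  rcases eq_or_ne z 0 with rfl | hz0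
  · simp [deriv_sinc_zero]
  rw [deriv_sinc_of_ne_zero hz0, norm_div, norm_pow, div_le_iff₀ (by positivity)]
  linarith [norm_mul_cos_sub_sin_le hz,
    show Real.cosh b * ‖z‖ * ‖z‖ ^ 2 = Real.cosh b * ‖z‖ ^ 3 by ring]

theorem sin_div_le_norm_sinc {α : ℝ} (hα0 : 0 < α) (hαπ : α ≤ π) {z : ℂ} (hz : |z.re| ≤ α) :
    Real.sin α / α ≤ ‖sinc z‖ := by
  rcases eq_or_ne z 0 with rfl | hz0
  · rw [sinc_zero, norm_one]
    exact (div_le_one hα0).2 (Real.sin_le hα0.le)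
  have h := sin_div_mul_norm_le_norm_sin hα0 hαπ hz
  rwa [sin_eq_mul_sinc, norm_mul, mul_comm ‖z‖, mul_le_mul_iff_left₀ (norm_pos_iff.2 hz0)] at h

theorem sinc_ne_zero {α : ℝ} (hα : α ∈ Set.Ioo 0 π) {z : ℂ} (hz : |z.re| ≤ α) : sinc z ≠ 0 :=
  norm_pos_iff.1 <| (div_pos (Real.sin_pos_of_pos_of_lt_pi hα.1 hα.2) hα.1).trans_le
    (sin_div_le_norm_sinc hα.1 hα.2.le hz)

end Complex

noncomputable def cosDivSinc (s : ℝ) (u : ℂ) : ℂ := Complex.cos (s * u) / Complex.sinc u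

noncomputable def cosDivSincDerivBound (α b : ℝ) : ℝ :=
  Real.cosh b * α / Real.sin α + (Real.cosh b * α / Real.sin α) ^ 2

theorem cosDivSincDerivBound_pos {α : ℝ} (hα : α ∈ Set.Ioo 0 π) (b : ℝ) :
    0 < cosDivSincDerivBound α b := by
  have := Real.sin_pos_of_pos_of_lt_pi hα.1 hα.2
  have := hα.1
  unfold cosDivSincDerivBound
  positivity

theorem cosDivSinc_neg (s : ℝ) (u : ℂ) : cosDivSinc s (-u) = cosDivSinc s u := by
  simp [cosDivSinc, Complex.sinc_neg]

theorem hasDerivAt_cosDivSinc (s : ℝ) {u : ℂ} (hu : Complex.sinc u ≠ 0) :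
    HasDerivAt (cosDivSinc s)
      (-(s * Complex.sin (s * u)) / Complex.sinc u
        - Complex.cos (s * u) * deriv Complex.sinc u / Complex.sinc u ^ 2) u := by
  have hcos : HasDerivAt (fun u : ℂ => Complex.cos (s * u)) (-Complex.sin (s * u) * (s * 1)) u :=
    (Complex.hasDerivAt_cos _).comp u ((hasDerivAt_id' u).const_mul (s : ℂ))
  exact (hcos.div (Complex.differentiable_sinc u).hasDerivAt hu).congr_deriv (by field_simp)

theorem norm_deriv_cosDivSinc_le {s α b : ℝ} {u : ℂ} (hs : s ∈ Set.Icc 0 1)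
    (hα : α ∈ Set.Ioo 0 π) (hre : |u.re| ≤ α) (him : |u.im| ≤ b) :
    ‖deriv (cosDivSinc s) u‖ ≤ cosDivSincDerivBound α b * ‖u‖ := by
  obtain ⟨hs0, hs1⟩ := hs
  have hsinα : 0 < Real.sin α := Real.sin_pos_of_pos_of_lt_pi hα.1 hα.2
  set c := Real.sin α / α with hc_def
  have hc : 0 < c := div_pos hsinα hα.1
  have hsinc : c ≤ ‖Complex.sinc u‖ := Complex.sin_div_le_norm_sinc hα.1 hα.2.le hre
  have hsu : |((s : ℂ) * u).im| ≤ b := by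
    rw [Complex.im_ofReal_mul, abs_mul, abs_of_nonneg hs0]
    exact (mul_le_of_le_one_left (abs_nonneg _) hs1).trans him
  have hsin : ‖(s : ℂ) * Complex.sin (s * u)‖ ≤ Real.cosh b * ‖u‖ := by
    rw [norm_mul, Complex.norm_real, Real.norm_of_nonneg hs0]
    calc s * ‖Complex.sin (s * u)‖ ≤ s * (Real.cosh b * (s * ‖u‖)) := by
          gcongr
          simpa [norm_mul, abs_of_nonneg hs0] using Complex.norm_sin_le_cosh_mul_norm hsu
      _ = s * s * (Real.cosh b * ‖u‖) := by ring
      _ ≤ Real.cosh b * ‖u‖ :=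
          mul_le_of_le_one_left (by positivity) (mul_le_one₀ hs1 hs0 hs1)
  have hcos := Complex.norm_cos_le_cosh hsu
  have hderiv := Complex.norm_deriv_sinc_le him
  rw [(hasDerivAt_cosDivSinc s (Complex.sinc_ne_zero hα hre)).deriv]
  calc _ ≤ ‖(s : ℂ) * Complex.sin (s * u)‖ / ‖Complex.sinc u‖
        + ‖Complex.cos (s * u)‖ * ‖deriv Complex.sinc u‖ / ‖Complex.sinc u‖ ^ 2 := by
        refine (norm_sub_le _ _).trans_eq ?_
        rw [norm_div, norm_neg, norm_div, norm_mul (Complex.cos _), norm_pow]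
    _ ≤ Real.cosh b * ‖u‖ / c + Real.cosh b * (Real.cosh b * ‖u‖) / c ^ 2 := by
        gcongr
    _ = cosDivSincDerivBound α b * ‖u‖ := by
        rw [cosDivSincDerivBound, hc_def]
        field_simp

theorem mul_cos_div_mul_sin_eq_cosDivSinc {z a : ℂ} {φ θ : ℝ} (hz : z ≠ 0) (hθ : θ ≠ 0) :
    z * Complex.cos (z * φ) / (a * Complex.sin (z * θ)) =
      cosDivSinc (φ / θ) (z * θ) / (a * θ) := by
  have harg : ((φ / θ : ℝ) : ℂ) * (z * θ) = z * φ := by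
    have : (θ : ℂ) ≠ 0 := Complex.ofReal_ne_zero.2 hθ
    push_cast
    field_simp
  rw [cosDivSinc, harg, Complex.sin_eq_mul_sinc, div_div,
    show a * (z * θ * Complex.sinc (z * θ)) = z * (Complex.sinc (z * θ) * (a * θ)) by ring,
    mul_div_mul_left _ _ hz]

theorem norm_cosDivSinc_add_sub_cosDivSinc_sub_le {s α b h : ℝ} {w : ℂ} (hs : s ∈ Set.Icc 0 1)
    (hα : α ∈ Set.Ioo 0 π) (hh : 0 ≤ h) (hre : |w.re| + h ≤ α) (him : |w.im| ≤ b) :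
    ‖cosDivSinc s (w + h) - cosDivSinc s (w - h)‖ ≤ 4 * cosDivSincDerivBound α b * h * ‖w‖ := by
  set R := {u : ℂ | |u.re| ≤ α} ∩ {u : ℂ | |u.im| ≤ b}
  have hR : Convex ℝ R := (convex_abs_re_le α).inter (convex_abs_im_le b)
  have hb : 0 ≤ b := (abs_nonneg _).trans him
  have hhα : h ≤ α := (le_add_of_nonneg_left (abs_nonneg w.re)).trans hre
  have hmem : ∀ t : ℝ, |t| ≤ h → w + t ∈ R := fun t ht => by
    refine ⟨?_, by simpa using him⟩
    show |(w + t).re| ≤ α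
    rw [Complex.add_re, Complex.ofReal_re]
    exact (abs_add_le _ _).trans (by linarith)
  have key := norm_image_add_sub_image_sub_le hR
    (fun z hz => (hasDerivAt_cosDivSinc s (Complex.sinc_ne_zero hα hz.1)).differentiableAt)
    (fun z hz => norm_deriv_cosDivSinc_le hs hα hz.1 hz.2) (cosDivSincDerivBound_pos hα b).le
    (cosDivSinc_neg s h) (hmem h (abs_of_nonneg hh).le)
    (by simpa [sub_eq_add_neg] using hmem (-h) (by simp [abs_of_nonneg hh]))
    ⟨by simpa [abs_of_nonneg hh] using hhα, by simpa using hb⟩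
    ⟨by simpa [abs_of_nonneg hh] using hhα, by simpa using hb⟩
  simpa [Complex.norm_real, Real.norm_of_nonneg hh] using key

/-- Estimate (C.3): for `Re λ ∈ I_ε`, `|Im λ|θ < 1/4`, `|λ−1| ≥ 1/4`, `|λ+1| ≥ 1/4`,
the difference of the two cosine quotients is bounded by `Cθ`. -/
theorem cosine_quotient_cancellation (ε : ℝ) (hε : ε ∈ Set.Ioo (0:ℝ) 1) :
    ∃ C : ℝ, 0 < C ∧ ∀ θ : ℝ, 0 < θ → ∀ lam : ℂ, ∀ φ : ℝ,
      1 - (1 - ε) * π / θ ≤ lam.re → lam.re ≤ (1 - ε) * π / θ - 1 →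
      |lam.im| * θ < 1/4 →
      1/4 ≤ ‖lam - 1‖ → 1/4 ≤ ‖lam + 1‖ →
      φ ∈ Set.Ioo (0:ℝ) θ →
      ‖(lam + 1) * Complex.cos ((lam + 1) * (φ : ℂ))
            / (4 * lam * Complex.sin ((lam + 1) * θ))
          - (lam - 1) * Complex.cos ((lam - 1) * (φ : ℂ))
            / (4 * lam * Complex.sin ((lam - 1) * θ))‖
        ≤ C * θ := by
  set α := (1 - ε) * π
  have hα : α ∈ Set.Ioo 0 π := ⟨by nlinarith [hε.2, pi_pos], by nlinarith [hε.1, pi_pos]⟩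
  refine ⟨cosDivSincDerivBound α (1 / 4), cosDivSincDerivBound_pos hα _, ?_⟩
  intro θ hθ lam φ hre₁ hre₂ him hlm hlp ⟨hφ0, hφθ⟩
  have hlm0 : lam - 1 ≠ 0 := fun h => by norm_num [h] at hlm
  have hlp0 : lam + 1 ≠ 0 := fun h => by norm_num [h] at hlp
  have hs : φ / θ ∈ Set.Icc 0 1 := ⟨div_nonneg hφ0.le hθ.le, (div_le_one hθ).2 hφθ.le⟩
  have hre : |(lam * θ).re| + θ ≤ α := by
    have hlam : |lam.re| ≤ α / θ - 1 := abs_le.2 ⟨by linarith, hre₂⟩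
    rw [le_sub_iff_add_le, le_div_iff₀ hθ] at hlam
    rw [Complex.re_mul_ofReal, abs_mul, abs_of_pos hθ]
    linarith
  have him' : |(lam * θ).im| ≤ 1 / 4 := by
    rw [Complex.im_mul_ofReal, abs_mul, abs_of_pos hθ]
    exact him.le
  rw [mul_cos_div_mul_sin_eq_cosDivSinc hlp0 hθ.ne', mul_cos_div_mul_sin_eq_cosDivSinc hlm0 hθ.ne',
    ← sub_div, add_mul, sub_mul, one_mul, norm_div]
  refine div_le_of_le_mul₀ (norm_nonneg _) (mul_pos (cosDivSincDerivBound_pos hα _) hθ).le ?_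
  calc _ ≤ 4 * cosDivSincDerivBound α (1 / 4) * θ * ‖lam * θ‖ :=
        norm_cosDivSinc_add_sub_cosDivSinc_sub_le hs hα hθ.le hre him'
    _ = cosDivSincDerivBound α (1 / 4) * θ * ‖4 * lam * θ‖ := by
        simp only [norm_mul, Complex.norm_real, Real.norm_of_nonneg hθ.le]
        norm_num
        ring
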